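/- Let c, d > 2 and n = c + d. With I as in the previous statement and J = I + (T_∞), the ideal I is radical: √I = I. -/

import Mathlib

open MvPolynomial

/-- Index set for the Plücker variables `T_{ij}`, `i < j` (0-indexed: `1 ≤ i` becomes `0 ≤ i`,
`j ≤ n` becomes `j.val < n`). -/
abbrev PIdx (n : ℕ) := {p : Fin n × Fin n // p.1 < p.2}

/-- Index set for the variables `T_{ij}` together with the extra variable `T_∞`. -/
abbrev Idx (n : ℕ) := PIdx n ⊕ Unit

/-- The variable `T_{ij}`. -/
noncomputable def W {n : ℕ} (i j : Fin n) (h : i < j) : MvPolynomial (Idx n) ℂ :=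
  X (Sum.inl ⟨(i, j), h⟩)

/-- The variable `T_∞`. -/
noncomputable def Tinf {n : ℕ} : MvPolynomial (Idx n) ℂ := X (Sum.inr ())

/-- Generators of the ideal `I`: `T_∞T_{ij}T_{kl} - T_{ik}T_{jl} + T_{il}T_{jk}` for
quadruples `i < j ≤ c < k < l` (1-indexed; `j ≤ c` is `j.val < c` and `c + 1 ≤ k` is
`c ≤ k.val` in 0-indexed terms), and the Plücker trinomials
`T_{ij}T_{kl} - T_{ik}T_{jl} + T_{il}T_{jk}` for all other quadruples `i < j < k < l`. -/
def IGens (c n : ℕ) : Set (MvPolynomial (Idx n) ℂ) :=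
  {P | ∃ (i j k l : Fin n) (hij : i < j) (hjk : j < k) (hkl : k < l),
    ((j.val < c ∧ c ≤ k.val) ∧
      P = Tinf * W i j hij * W k l hkl - W i k (hij.trans hjk) * W j l (hjk.trans hkl)
            + W i l (hij.trans (hjk.trans hkl)) * W j k hjk) ∨
    (¬(j.val < c ∧ c ≤ k.val) ∧
      P = W i j hij * W k l hkl - W i k (hij.trans hjk) * W j l (hjk.trans hkl)
            + W i l (hij.trans (hjk.trans hkl)) * W j k hjk)}

/-- Generators of the ideal `J = I + (T_∞)`: the variable `T_∞`, the binomials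
`-T_{ik}T_{jl} + T_{il}T_{jk}` for quadruples `i < j ≤ c < k < l`, and the Plücker
trinomials for all other quadruples `i < j < k < l`. -/
def JGens (c n : ℕ) : Set (MvPolynomial (Idx n) ℂ) :=
  insert Tinf
    {P | ∃ (i j k l : Fin n) (hij : i < j) (hjk : j < k) (hkl : k < l),
      ((j.val < c ∧ c ≤ k.val) ∧
        P = - W i k (hij.trans hjk) * W j l (hjk.trans hkl)
              + W i l (hij.trans (hjk.trans hkl)) * W j k hjk) ∨
      (¬(j.val < c ∧ c ≤ k.val) ∧
        P = W i j hij * W k l hkl - W i k (hij.trans hjk) * W j l (hjk.trans hkl)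
              + W i l (hij.trans (hjk.trans hkl)) * W j k hjk)}

/-!
The ideal `I` is the kernel of an explicit ring map `φ` from the Plücker ring to a polynomial
ring, hence prime, hence radical.

The generators of `I` lie in `ker φ` by a direct computation. Conversely, a generator rewrites a
monomial containing a nested product `T_il T_jk` (`i < j < k < l`) into monomials with a smaller
value of `∑ (j - i)²`, so modulo `I` every polynomial is a combination of nest-free monomials.
`φ` sends these to polynomials with pairwise distinct lex-leading exponents: the leading exponent
of the image of a monomial records its power of `T_∞` and the multisets of left and of right
endpoints of its pairs, and a nest-free multiset of pairs is determined by those.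
-/

open MonomialOrder

namespace Multiset

variable {α : Type*} [LinearOrder α]

def NestFree (S : Multiset (α × α)) : Prop :=
  ∀ p ∈ S, ∀ q ∈ S, ¬(p.1 < q.1 ∧ q.2 < p.2)

theorem NestFree.of_le {S T : Multiset (α × α)} (hT : T.NestFree) (h : S ≤ T) : S.NestFree :=
  fun p hp q hq => hT p (mem_of_le h hp) q (mem_of_le h hq)

/-- The lexicographically least pair is least in both coordinates, since any pair with a larger
first and a smaller second coordinate would be nested in it. -/
theorem NestFree.exists_forall_le {S : Multiset (α × α)} (hS : S.NestFree) (h0 : S ≠ 0) :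
    ∃ p ∈ S, ∀ q ∈ S, p.1 ≤ q.1 ∧ p.2 ≤ q.2 := by
  classical
  obtain ⟨p, hp, hmin⟩ := S.toFinset.exists_min_image toLex (by simpa using h0)
  rw [mem_toFinset] at hp
  refine ⟨p, hp, fun q hq => ?_⟩
  rcases Prod.Lex.le_iff.mp (hmin q (mem_toFinset.mpr hq)) with h | ⟨h, h'⟩
  · exact ⟨h.le, not_lt.mp fun h' => hS p hp q hq ⟨h, h'⟩⟩
  · exact ⟨h.le, h'⟩

theorem NestFree.eq_of_map_eq {S T : Multiset (α × α)} (hS : S.NestFree) (hT : T.NestFree)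
    (h₁ : S.map Prod.fst = T.map Prod.fst) (h₂ : S.map Prod.snd = T.map Prod.snd) : S = T := by
  induction S using strongInductionOn generalizing T with
  | ih S ih =>
  rcases eq_or_ne S 0 with rfl | hS0
  · simpa [eq_comm] using h₁
  have hT0 : T ≠ 0 := by rintro rfl; simp [hS0] at h₁
  obtain ⟨p, hp, hpS⟩ := hS.exists_forall_le hS0
  obtain ⟨q, hq, hqT⟩ := hT.exists_forall_le hT0
  have le_of_mem_map {U : Multiset (α × α)} {r : α × α} (hr : ∀ s ∈ U, r.1 ≤ s.1 ∧ r.2 ≤ s.2)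
      {a b : α} (ha : a ∈ U.map Prod.fst) (hb : b ∈ U.map Prod.snd) : r.1 ≤ a ∧ r.2 ≤ b := by
    obtain ⟨s, hs, rfl⟩ := mem_map.mp ha
    obtain ⟨t, ht, rfl⟩ := mem_map.mp hb
    exact ⟨(hr s hs).1, (hr t ht).2⟩
  have hpq := le_of_mem_map hpS (h₁ ▸ mem_map_of_mem _ hq) (h₂ ▸ mem_map_of_mem _ hq)
  have hqp := le_of_mem_map hqT (h₁.symm ▸ mem_map_of_mem _ hp) (h₂.symm ▸ mem_map_of_mem _ hp)
  obtain rfl : p = q := Prod.ext (hpq.1.antisymm hqp.1) (hpq.2.antisymm hqp.2)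
  obtain ⟨S', rfl⟩ := exists_cons_of_mem hp
  obtain ⟨T', rfl⟩ := exists_cons_of_mem hq
  simp only [map_cons, cons_inj_right] at h₁ h₂
  rw [ih S' (lt_cons_self S' p) (hS.of_le (le_cons_self S' p)) (hT.of_le (le_cons_self T' p))
    h₁ h₂]

end Multiset

theorem Finsupp.exists_eq_add_single_add_single {α : Type*} {m : α →₀ ℕ} {v w : α}
    (hvw : v ≠ w) (hv : m v ≠ 0) (hw : m w ≠ 0) : ∃ m', m = m' + single v 1 + single w 1 := by
  classical
  refine ⟨m - (single v 1 + single w 1), ?_⟩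
  rw [add_assoc, tsub_add_cancel_of_le]
  intro u
  simp only [coe_add, Pi.add_apply, single_apply]
  split_ifs <;> subst_vars <;> first | exact absurd rfl hvw | omega

theorem Nat.sq_tsub_add_sq_tsub_lt {a b c d : ℕ} (hab : a < b) (hbc : b < c) (hcd : c < d) :
    (c - a) ^ 2 + (d - b) ^ 2 < (d - a) ^ 2 + (c - b) ^ 2 ∧
      (b - a) ^ 2 + (d - c) ^ 2 < (d - a) ^ 2 + (c - b) ^ 2 := by
  zify [hab.le, hbc.le, hcd.le, (hab.trans hbc).le, (hbc.trans hcd).le,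
    (hab.trans (hbc.trans hcd)).le]
  constructor <;> nlinarith

namespace MonomialOrder

theorem linearIndependent_of_injective_degree {σ R ι : Type*} [CommRing R] [IsDomain R]
    (m : MonomialOrder σ) {f : ι → MvPolynomial σ R} (hf : ∀ i, f i ≠ 0)
    (hd : Function.Injective fun i => m.degree (f i)) : LinearIndependent R f := by
  classical
  rw [linearIndependent_iff']
  intro s g hsum i hi
  by_contra hgi
  have supDegree_eq (p : MvPolynomial σ R) :
      AddMonoidAlgebra.supDegree m.toSyn p = m.toSyn (m.degree p) := by
    simp [degree, AddMonoidAlgebra.supDegree]; rfl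
  have hreg {j} (hj : j ∈ (s.filter (g · ≠ 0) : Set ι)) : IsRegular (g j) :=
    IsRegular.of_ne_zero (by simp_all)
  refine AddMonoidAlgebra.sum_ne_zero_of_injOn_supDegree (D := m.toSyn)
    (s := s.filter (g · ≠ 0)) (f := fun j => g j • f j) ⟨i, by simp [hi, hgi]⟩
    (fun j hj => smul_ne_zero (Finset.mem_filter.mp hj).2 (hf j)) (fun j hj k hk hjk => ?_) ?_
  · simp only [Function.comp_apply, supDegree_eq, degree_smul_of_isRegular (hreg hj),
      degree_smul_of_isRegular (hreg hk)] at hjk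
    exact hd (m.toSyn.injective hjk)
  · rwa [Finset.sum_filter_of_ne fun j _ hj => left_ne_zero_of_smul hj]

variable {σ R : Type*} [LinearOrder σ] [WellFoundedGT σ] [CommSemiring R]

theorem lex_degree_lt_of_mem_supported {q : MvPolynomial σ R} {e : σ →₀ ℕ} {u : σ}
    (hq : q ∈ supported R (Set.Ioi u)) (he : e u ≠ 0) : lex.degree q ≺[lex] e := by
  have hvanish : ∀ v ≤ u, lex.degree q v = 0 := by
    intro v hv
    by_contra hne
    rcases eq_or_ne q 0 with rfl | hq0
    · simp at hne
    have : v ∈ q.vars := (mem_vars_iff_mem_support v).mpr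
      ⟨_, lex.degree_mem_support hq0, Finsupp.mem_support_iff.mpr hne⟩
    exact (mem_supported.mp hq this : u < v).not_ge hv
  have hsingle : lex.degree q ≺[lex] Finsupp.single u 1 := by
    rw [lex_lt_iff, Finsupp.Lex.lt_iff]
    refine ⟨u, fun v hv => ?_, ?_⟩
    · simp [hvanish v hv.le, Finsupp.single_eq_of_ne hv.ne]
    · simp [hvanish u le_rfl]
  calc lex.toSyn (lex.degree q) < lex.toSyn (Finsupp.single u 1) := hsingle
    _ ≤ lex.toSyn (Finsupp.single u 1 + (e - Finsupp.single u 1)) := by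
      rw [map_add]; exact lex.le_add_right _ _
    _ = lex.toSyn e := by
      rw [add_tsub_cancel_of_le (Finsupp.single_le_iff.mpr (Nat.one_le_iff_ne_zero.mpr he))]

theorem lex_degree_add_of_mem_supported {p q : MvPolynomial σ R} {u : σ}
    (hq : q ∈ supported R (Set.Ioi u)) (hp : lex.degree p u ≠ 0) :
    lex.degree (p + q) = lex.degree p :=
  lex.degree_add_of_lt (lex_degree_lt_of_mem_supported hq hp)

end MonomialOrder

namespace PluckerDegeneration

/-- Variables are ordered by class first, `x₁ < y < s < ε < x₂ < z₁ < z₂`, then by index; the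
index type is `Fin (n + 1)` only so that `s` and `ε` have an index even when `n = 0`. -/
abbrev Var (n : ℕ) := Lex (Fin 7 × Fin (n + 1))

variable {n : ℕ}

namespace Var

def x₁ (i : Fin n) : Var n := toLex (0, i.castSucc)
def y (i : Fin n) : Var n := toLex (1, i.castSucc)
def s : Var n := toLex (2, 0)
def ε : Var n := toLex (3, 0)
def x₂ (i : Fin n) : Var n := toLex (4, i.castSucc)
def z₁ (i : Fin n) : Var n := toLex (5, i.castSucc)
def z₂ (i : Fin n) : Var n := toLex (6, i.castSucc)

end Var

open Var

/-- `T_∞ ↦ εs²`, and `T_ij` goes to the `2 × 2` minor on columns `i, j` of the matrix with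
columns `(x₁ᵢ, x₂ᵢ)` for `i < c` and `(s(yᵢ + εz₁ᵢ), εs z₂ᵢ)` for `i ≥ c`, divided by `εs²` when
`c ≤ i`. -/
noncomputable def param (c : ℕ) : Idx n → MvPolynomial (Var n) ℂ
  | .inr _ => X ε * X s * X s
  | .inl ⟨(i, j), _⟩ =>
    if j.val < c then X (x₁ i) * X (x₂ j) - X (x₁ j) * X (x₂ i)
    else if c ≤ i.val then
      X (y i) * X (z₂ j) - X (y j) * X (z₂ i) + X ε * (X (z₁ i) * X (z₂ j) - X (z₁ j) * X (z₂ i))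
    else X ε * X s * (X (x₁ i) * X (z₂ j) - X (x₂ i) * X (z₁ j)) - X s * X (x₂ i) * X (y j)

theorem span_IGens_le_ker (c : ℕ) :
    Ideal.span (IGens c n) ≤ RingHom.ker (aeval (param c)) := by
  rw [Ideal.span_le]
  rintro _ ⟨i, j, k, l, hij, hjk, hkl, ⟨_, rfl⟩ | ⟨_, rfl⟩⟩ <;>
  · simp only [SetLike.mem_coe, RingHom.mem_ker, W, Tinf, map_add, map_sub, map_mul, aeval_X,
      param]
    split_ifs <;> first | omega | ring

def spread : Idx n → ℕ
  | .inl p => (p.1.2.val - p.1.1.val) ^ 2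
  | .inr _ => 0

def pairs : Idx n → Multiset (Fin n × Fin n)
  | .inl p => {p.1}
  | .inr _ => 0

def IsStandard (m : Idx n →₀ ℕ) : Prop := Multiset.NestFree (Finsupp.weight pairs m)

theorem count_weight_pairs (m : Idx n →₀ ℕ) (p : PIdx n) :
    (Finsupp.weight pairs m).count p.1 = m (.inl p) := by
  classical
  induction m using Finsupp.induction_linear with
  | zero => simp
  | add m₁ m₂ h₁ h₂ => simp [h₁, h₂]
  | single v e =>
    rcases v with q | _
    · by_cases h : q = p
      · subst h; simp [Finsupp.weight_single, pairs]
      · simpa [Finsupp.weight_single, pairs, h] using Or.inr fun h' => h (Subtype.ext h'.symm)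
    · simp [Finsupp.weight_single, pairs]

theorem mem_weight_pairs {m : Idx n →₀ ℕ} {q : Fin n × Fin n}
    (hq : q ∈ Finsupp.weight pairs m) : ∃ p : PIdx n, p.1 = q ∧ m (.inl p) ≠ 0 := by
  rw [Finsupp.weight_apply, Finsupp.sum, Multiset.mem_sum] at hq
  obtain ⟨v, hv, hqv⟩ := hq
  rcases v with p | _ <;> simp [pairs, Multiset.mem_nsmul] at hqv
  exact ⟨p, hqv.2.symm, Finsupp.mem_support_iff.mp hv⟩

theorem exists_straightening_mem_span (c : ℕ) (m : Idx n →₀ ℕ) {i j k l : Fin n}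
    (hij : i < j) (hjk : j < k) (hkl : k < l) :
    ∃ t : Idx n →₀ ℕ, Finsupp.weight spread t = 0 ∧
      monomial (m + .single (.inl ⟨(i, l), hij.trans (hjk.trans hkl)⟩) 1
          + .single (.inl ⟨(j, k), hjk⟩) 1) (1 : ℂ)
        - monomial (m + .single (.inl ⟨(i, k), hij.trans hjk⟩) 1
          + .single (.inl ⟨(j, l), hjk.trans hkl⟩) 1) 1
        + monomial (m + t + .single (.inl ⟨(i, j), hij⟩) 1 + .single (.inl ⟨(k, l), hkl⟩) 1) 1
      ∈ Ideal.span (IGens c n) := by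
  obtain ⟨t, ht, hrel⟩ : ∃ t : Idx n →₀ ℕ, Finsupp.weight spread t = 0 ∧
      W i l (hij.trans (hjk.trans hkl)) * W j k hjk - W i k (hij.trans hjk) * W j l (hjk.trans hkl)
        + monomial t 1 * W i j hij * W k l hkl ∈ Ideal.span (IGens c n) := by
    by_cases hstr : j.val < c ∧ c ≤ k.val
    · refine ⟨.single (.inr ()) 1, by simp [Finsupp.weight_single, spread], ?_⟩
      refine Ideal.subset_span ⟨i, j, k, l, hij, hjk, hkl, .inl ⟨hstr, ?_⟩⟩
      simp only [← X_pow_eq_monomial, pow_one, Tinf]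
      ring
    · refine ⟨0, map_zero _, Ideal.subset_span ⟨i, j, k, l, hij, hjk, hkl, .inr ⟨hstr, ?_⟩⟩⟩
      rw [monomial_zero', C_1, one_mul]
      ring
  refine ⟨t, ht, ?_⟩
  convert Ideal.mul_mem_left _ (monomial m 1) hrel using 1
  simp only [monomial_add_single, pow_one, W]
  rw [show monomial (m + t) (1 : ℂ) = monomial m 1 * monomial t 1 by rw [monomial_mul, one_mul]]
  ring

noncomputable def standardSpan (n : ℕ) : Submodule ℂ (MvPolynomial (Idx n) ℂ) :=
  Submodule.span ℂ (Set.range fun m : {m : Idx n →₀ ℕ // IsStandard m} => monomial m.1 1)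

theorem monomial_mem_sup_standardSpan (c : ℕ) (m : Idx n →₀ ℕ) :
    monomial m 1 ∈ (Ideal.span (IGens c n)).restrictScalars ℂ ⊔ standardSpan n := by
  induction hk : Finsupp.weight spread m using Nat.strong_induction_on generalizing m with
  | _ k ih =>
  by_cases hm : IsStandard m
  · exact Submodule.mem_sup_right (Submodule.subset_span ⟨⟨m, hm⟩, rfl⟩)
  obtain ⟨_, hq, _, hq', hij, hkl⟩ : ∃ q ∈ Finsupp.weight pairs m,
      ∃ q' ∈ Finsupp.weight pairs m, q.1 < q'.1 ∧ q'.2 < q.2 := by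
    simpa [IsStandard, Multiset.NestFree] using hm
  obtain ⟨⟨⟨i, l⟩, hil⟩, rfl, hmil⟩ := mem_weight_pairs hq
  obtain ⟨⟨⟨j, k⟩, hjk⟩, rfl, hmjk⟩ := mem_weight_pairs hq'
  dsimp only at hij hjk hkl
  obtain ⟨m, rfl⟩ := Finsupp.exists_eq_add_single_add_single (by simp [hij.ne]) hmil hmjk
  obtain ⟨t, ht, hrel⟩ := exists_straightening_mem_span c m hij hjk hkl
  have hspread := Nat.sq_tsub_add_sq_tsub_lt hij hjk hkl
  refine (Submodule.sub_mem_iff_left _ (ih _ ?_ _ rfl)).mp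
    ((Submodule.add_mem_iff_left _ (ih _ ?_ _ rfl)).mp (Submodule.mem_sup_left hrel)) <;>
  · simp only [← hk, map_add, Finsupp.weight_single, spread, smul_eq_mul, one_mul, ht]
    omega

theorem mem_sup_standardSpan (c : ℕ) (p : MvPolynomial (Idx n) ℂ) :
    p ∈ (Ideal.span (IGens c n)).restrictScalars ℂ ⊔ standardSpan n := by
  have : ⊤ ≤ (Ideal.span (IGens c n)).restrictScalars ℂ ⊔ standardSpan n := by
    rw [← (basisMonomials (Idx n) ℂ).span_eq, Submodule.span_le]
    rintro _ ⟨m, rfl⟩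
    exact monomial_mem_sup_standardSpan c m
  exact this Submodule.mem_top

noncomputable def leadExp (c : ℕ) : Idx n → (Var n →₀ ℕ)
  | .inr _ => .single ε 1 + .single s 1 + .single s 1
  | .inl ⟨(i, j), _⟩ =>
    if j.val < c then .single (x₁ i) 1 + .single (x₂ j) 1
    else if c ≤ i.val then .single (y i) 1 + .single (z₂ j) 1
    else .single ε 1 + .single s 1 + .single (x₁ i) 1 + .single (z₂ j) 1

theorem leadExp_ne_zero (c : ℕ) (v : Idx n) : leadExp c v ≠ 0 := by
  rcases v with ⟨⟨i, j⟩, hij⟩ | _ <;> simp only [leadExp] <;> try split_ifs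
  all_goals simp

/-- In each case the remaining terms only involve variables above the least variable of the
leading term. -/
theorem degree_param (c : ℕ) (v : Idx n) : lex.degree (param c v) = leadExp c v := by
  rcases v with ⟨⟨i, j⟩, hij⟩ | _
  · dsimp only at hij
    simp only [param, leadExp]
    split_ifs
    · rw [sub_eq_add_neg, lex_degree_add_of_mem_supported (u := x₁ i)]
      · simp [degree_mul, degree_X]
      · apply_rules [Subalgebra.neg_mem, Subalgebra.mul_mem, X_mem_supported.mpr] <;>
          simp [x₁, x₂, Prod.Lex.toLex_lt_toLex, hij]
      · simp [degree_mul, degree_X, x₁, x₂]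
    · rw [sub_add_eq_add_sub, add_sub_assoc, lex_degree_add_of_mem_supported (u := y i)]
      · simp [degree_mul, degree_X]
      · apply_rules [Subalgebra.sub_mem, Subalgebra.mul_mem, X_mem_supported.mpr] <;>
          simp [y, z₁, z₂, ε, Prod.Lex.toLex_lt_toLex, hij]
      · simp [degree_mul, degree_X, y, z₂]
    · rw [sub_eq_add_neg, mul_sub, sub_eq_add_neg, add_assoc, ← mul_assoc, ← mul_assoc,
        lex_degree_add_of_mem_supported (u := x₁ i)]
      · simp [degree_mul, degree_X]
      · apply_rules [Subalgebra.add_mem, Subalgebra.neg_mem, Subalgebra.mul_mem,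
          X_mem_supported.mpr] <;>
          simp [y, x₁, x₂, z₁, s, ε, Prod.Lex.toLex_lt_toLex, hij]
      · simp [degree_mul, degree_X, x₁, z₂, s, ε]
  · simp [param, leadExp, degree_mul, degree_X]

theorem param_ne_zero (c : ℕ) (v : Idx n) : param c v ≠ 0 :=
  ne_zero_of_degree_ne_zero (degree_param c v ▸ leadExp_ne_zero c v)

theorem aeval_monomial_param (c : ℕ) (m : Idx n →₀ ℕ) :
    aeval (param c) (monomial m (1 : ℂ)) = ∏ v ∈ m.support, param c v ^ m v := by
  rw [aeval_monomial, map_one, one_mul, Finsupp.prod]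

theorem aeval_monomial_ne_zero (c : ℕ) (m : Idx n →₀ ℕ) :
    aeval (param c) (monomial m (1 : ℂ)) ≠ 0 := by
  rw [aeval_monomial_param]
  exact Finset.prod_ne_zero_iff.mpr fun v _ => pow_ne_zero _ (param_ne_zero c v)

theorem degree_aeval_monomial (c : ℕ) (m : Idx n →₀ ℕ) :
    lex.degree (aeval (param c) (monomial m (1 : ℂ))) = Finsupp.weight (leadExp c) m := by
  rw [aeval_monomial_param, degree_prod fun v _ => pow_ne_zero _ (param_ne_zero c v),
    Finsupp.weight_apply, Finsupp.sum]
  simp [degree_pow, degree_param]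

theorem count_map_fst_weight_pairs (c : ℕ) (m : Idx n →₀ ℕ) (r : Fin n) :
    ((Finsupp.weight pairs m).map Prod.fst).count r =
      Finsupp.weight (leadExp c) m (x₁ r) + Finsupp.weight (leadExp c) m (y r) := by
  classical
  induction m using Finsupp.induction_linear with
  | zero => simp
  | add m₁ m₂ h₁ h₂ =>
    simp only [map_add, Multiset.map_add, Multiset.count_add, h₁, h₂, Finsupp.coe_add,
      Pi.add_apply]
    ring
  | single v e =>
    rcases v with ⟨⟨i, j⟩, hij⟩ | _
    · simp only [Finsupp.weight_single, pairs, leadExp]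
      split_ifs <;> simp [x₁, y, x₂, z₂, s, ε, Finsupp.single_apply, Multiset.map_nsmul,
        Multiset.count_singleton, eq_comm]
    · simp [Finsupp.weight_single, pairs, leadExp, x₁, y, s, ε]

theorem count_map_snd_weight_pairs (c : ℕ) (m : Idx n →₀ ℕ) (r : Fin n) :
    ((Finsupp.weight pairs m).map Prod.snd).count r =
      Finsupp.weight (leadExp c) m (x₂ r) + Finsupp.weight (leadExp c) m (z₂ r) := by
  classical
  induction m using Finsupp.induction_linear with
  | zero => simp
  | add m₁ m₂ h₁ h₂ =>
    simp only [map_add, Multiset.map_add, Multiset.count_add, h₁, h₂, Finsupp.coe_add,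
      Pi.add_apply]
    ring
  | single v e =>
    rcases v with ⟨⟨i, j⟩, hij⟩ | _
    · simp only [Finsupp.weight_single, pairs, leadExp]
      split_ifs <;> simp [x₁, y, x₂, z₂, s, ε, Finsupp.single_apply, Multiset.map_nsmul,
        Multiset.count_singleton, eq_comm]
    · simp [Finsupp.weight_single, pairs, leadExp, x₂, z₂, s, ε]

theorem weight_leadExp_s (c : ℕ) (m : Idx n →₀ ℕ) :
    Finsupp.weight (leadExp c) m s = Finsupp.weight (leadExp c) m ε + m (.inr ()) := by
  classical
  induction m using Finsupp.induction_linear with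
  | zero => simp
  | add m₁ m₂ h₁ h₂ =>
    simp only [map_add, h₁, h₂, Finsupp.coe_add, Pi.add_apply]
    ring
  | single v e =>
    rcases v with ⟨⟨i, j⟩, hij⟩ | _
    · simp only [Finsupp.weight_single, leadExp]
      split_ifs <;> simp [x₁, y, x₂, z₂, s, ε]
    · simp [Finsupp.weight_single, leadExp, s, ε]

theorem eq_of_weight_leadExp_eq (c : ℕ) {m m' : Idx n →₀ ℕ} (hm : IsStandard m)
    (hm' : IsStandard m') (h : Finsupp.weight (leadExp c) m = Finsupp.weight (leadExp c) m') :
    m = m' := by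
  have hpairs : Finsupp.weight pairs m = Finsupp.weight pairs m' := by
    refine hm.eq_of_map_eq hm' ?_ ?_ <;> ext r
    · rw [count_map_fst_weight_pairs c, count_map_fst_weight_pairs c, h]
    · rw [count_map_snd_weight_pairs c, count_map_snd_weight_pairs c, h]
  ext v
  rcases v with p | ⟨⟨⟩⟩
  · rw [← count_weight_pairs, ← count_weight_pairs, hpairs]
  · have := weight_leadExp_s c m
    rw [h, weight_leadExp_s c m'] at this
    exact (Nat.add_left_cancel this).symm

theorem linearIndependent_aeval_standard (c : ℕ) :
    LinearIndependent ℂ fun m : {m : Idx n →₀ ℕ // IsStandard m} =>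
      aeval (param c) (monomial m.1 (1 : ℂ)) :=
  lex.linearIndependent_of_injective_degree (fun m => aeval_monomial_ne_zero c m.1)
    fun m m' h => Subtype.ext <| eq_of_weight_leadExp_eq c m.2 m'.2 <| by
      simpa only [degree_aeval_monomial] using h

theorem eq_zero_of_mem_standardSpan (c : ℕ) {p : MvPolynomial (Idx n) ℂ}
    (hp : p ∈ standardSpan n) (h0 : aeval (param c) p = 0) : p = 0 := by
  obtain ⟨l, rfl⟩ := Finsupp.mem_span_range_iff_exists_finsupp.mp hp
  have : l = 0 := linearIndependent_iff.mp (linearIndependent_aeval_standard c) l <| by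
    simpa [Finsupp.linearCombination_apply, map_finsuppSum] using h0
  simp [this]

theorem ker_aeval_param (c : ℕ) : RingHom.ker (aeval (param c)) = Ideal.span (IGens c n) := by
  refine le_antisymm (fun p hp => ?_) (span_IGens_le_ker c)
  obtain ⟨g, hg, h, hh, rfl⟩ := Submodule.mem_sup.mp (mem_sup_standardSpan c p)
  rw [RingHom.mem_ker, map_add, span_IGens_le_ker c hg, zero_add] at hp
  rwa [eq_zero_of_mem_standardSpan c hh hp, add_zero]

theorem isPrime_span_IGens (c : ℕ) : (Ideal.span (IGens c n)).IsPrime :=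
  ker_aeval_param c ▸ RingHom.ker_isPrime _

end PluckerDegeneration

theorem stmt_10_general (c d : ℕ) :
    (Ideal.span (IGens c (c + d))).radical = Ideal.span (IGens c (c + d)) :=
  (PluckerDegeneration.isPrime_span_IGens c).isRadical.radical

/-- For `c, d > 2` and `n = c + d`, the ideal `I` is radical: `√I = I`. -/
theorem stmt_10 (c d : ℕ) (hc : 2 < c) (hd : 2 < d) :
    (Ideal.span (IGens c (c + d))).radical = Ideal.span (IGens c (c + d)) :=
  stmt_10_general c d
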